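/- arXiv:hep-th/9506108 — 4 statements merged into one kernel-verified Lean document; each statement's English description precedes it below -/
import Mathlib

section
/- Let L ≥ 2 and let A be the adjacency matrix of the A_L Dynkin diagram. For a,b ∈ {1,...,L}, the number of two-step allowed paths (a,a',b) with a' ≠ min(a,b) equals [(I+A)^2 - (I+A)]_{a,b}. -/
/-- Adjacency matrix of the A_L Dynkin diagram: entry 1 iff |a-b| = 1. -/
def dynkinA (L : ℕ) : Matrix (Fin L) (Fin L) ℤ :=
  Matrix.of fun a b => if (a : ℕ) + 1 = (b : ℕ) ∨ (b : ℕ) + 1 = (a : ℕ) then 1 else 0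

lemma dynkinB_val (L : ℕ) (x y : Fin L) :
    (1 + dynkinA L) x y
      = if x = y ∨ (x : ℕ) + 1 = (y : ℕ) ∨ (y : ℕ) + 1 = (x : ℕ) then 1 else 0 := by
  simp only [Matrix.add_apply, Matrix.one_apply, dynkinA, Matrix.of_apply]
  by_cases h1 : x = y
  · subst h1; simp
  · simp [h1]

lemma dynkinB_diag (L : ℕ) (x : Fin L) : (1 + dynkinA L) x x = 1 := by
  rw [dynkinB_val]; simp

lemma dynkinB_zero_or_one (L : ℕ) (x y : Fin L) :
    (1 + dynkinA L) x y = 0 ∨ (1 + dynkinA L) x y = 1 := by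
  rw [dynkinB_val]; split <;> simp

/-- The number of allowed two-step paths (a,a',b) with a' ≠ min(a,b) equals
the entry [(I+A)² - (I+A)]_{a,b} of the fused adjacency matrix A^{(2,0)}. -/
theorem two_step_sym_count (L : ℕ) (hL : 2 ≤ L) (a b : Fin L) :
    (Nat.card {a' : Fin L // (1 + dynkinA L) a a' = 1 ∧
        (1 + dynkinA L) a' b = 1 ∧ a' ≠ min a b} : ℤ)
      = (((1 + dynkinA L) ^ 2 - (1 + dynkinA L) : Matrix (Fin L) (Fin L) ℤ)) a b := by
  classical
  set B := (1 + dynkinA L) with hB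
  set m := min a b with hm
  have hmul : ∀ a' : Fin L, B a a' * B a' b
      = if (B a a' = 1 ∧ B a' b = 1) then (1 : ℤ) else 0 := by
    intro a'
    rcases dynkinB_zero_or_one L a a' with h | h <;>
      rcases dynkinB_zero_or_one L a' b with h' | h' <;>
      simp [hB ▸ h, hB ▸ h']
  have hmid : B a m * B m b = B a b := by
    rcases le_total a b with h | h
    · have : m = a := min_eq_left h
      rw [this, hB, dynkinB_diag, one_mul]
    · have : m = b := min_eq_right h
      rw [this, hB, dynkinB_diag, mul_one]
  have hcard : (Nat.card {a' : Fin L // B a a' = 1 ∧ B a' b = 1 ∧ a' ≠ m} : ℤ)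
      = ∑ a' : Fin L, (if (B a a' = 1 ∧ B a' b = 1 ∧ a' ≠ m) then (1 : ℤ) else 0) := by
    rw [Nat.card_eq_fintype_card, Fintype.card_subtype, Finset.card_filter]
    push_cast
    rfl
  have hsum : ∑ a' : Fin L, (if (B a a' = 1 ∧ B a' b = 1 ∧ a' ≠ m) then (1 : ℤ) else 0)
      = (∑ a' : Fin L, B a a' * B a' b) - B a b := by
    rw [← Finset.add_sum_erase _ _ (Finset.mem_univ m),
        ← Finset.add_sum_erase _ (fun a' => B a a' * B a' b) (Finset.mem_univ m)]
    have h0 : (if (B a m = 1 ∧ B m b = 1 ∧ m ≠ m) then (1 : ℤ) else 0) = 0 := by simp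
    have h1 : ∑ x ∈ Finset.univ.erase m,
          (if (B a x = 1 ∧ B x b = 1 ∧ x ≠ m) then (1 : ℤ) else 0)
        = ∑ x ∈ Finset.univ.erase m, B a x * B x b := by
      refine Finset.sum_congr rfl fun x hx => ?_
      have hxm : x ≠ m := Finset.ne_of_mem_erase hx
      rw [hmul]; simp [hxm]
    rw [h0, h1, hmid]; ring
  rw [hcard, hsum, Matrix.sub_apply, pow_two, Matrix.mul_apply]
end

section
/- For the A_3 fused adjacency matrices defined by the su(3) fusion rules, the Z_3 symmetry of the level-5 weight lattice holds: A^{(n,m)} = A^{(5-n-m, n)} for all nonnegative n,m with n+m ≤ 5. -/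
/-- Adjacency matrix of the A_3 Dynkin diagram. -/
def A3 : Matrix (Fin 3) (Fin 3) ℤ :=
  Matrix.of fun a b => if (a : ℕ) + 1 = (b : ℕ) ∨ (b : ℕ) + 1 = (a : ℕ) then 1 else 0

/-- Z_3 symmetry of the level-5 su(3) weight lattice for the fused adjacency
matrices of the dilute A_3 model: A^{(n,m)} = A^{(5-n-m,n)}. -/
theorem fused_adjacency_Z3 (B : ℤ → ℤ → Matrix (Fin 3) (Fin 3) ℤ)
    (hneg : ∀ n m : ℤ, n < 0 ∨ m < 0 → B n m = 0)
    (h00 : B 0 0 = 1) (h10 : B 1 0 = 1 + A3)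
    (hsym : ∀ n m : ℤ, B n m = B m n)
    (hrec : ∀ n m : ℤ, 0 ≤ n → 0 ≤ m →
      B n m * B 1 0 = B (n + 1) m + B (n - 1) (m + 1) + B n (m - 1)) :
    ∀ n m : ℤ, 0 ≤ n → 0 ≤ m → n + m ≤ 5 → B n m = B (5 - n - m) n := by
  have h00' : B 0 0 = !![1,0,0;0,1,0;0,0,1] := by rw [h00]; decide
  have h10' : B 1 0 = !![1,1,0;1,1,1;0,1,1] := by rw [h10]; decide
  have h01 : B 0 1 = !![1,1,0;1,1,1;0,1,1] := by rw [hsym]; exact h10'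
  have h11 : B 1 1 = !![1,2,1;2,2,2;1,2,1] := by
    have h := hrec 0 1 (by norm_num) (by norm_num)
    norm_num at h
    rw [h01, hneg (-1) (2) (by norm_num), h00', h10'] at h
    rw [show !![1,1,0;1,1,1;0,1,1] * (!![1,1,0;1,1,1;0,1,1] : Matrix (Fin 3) (Fin 3) ℤ) = !![1,2,1;2,2,2;1,2,1] + 0 + !![1,0,0;0,1,0;0,0,1] from by decide] at h
    exact (add_right_cancel (add_right_cancel h)).symm
  have h20 : B 2 0 = !![1,1,1;1,2,1;1,1,1] := by
    have h := hrec 1 0 (by norm_num) (by norm_num)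
    norm_num at h
    rw [h10', h01, hneg (1) (-1) (by norm_num)] at h
    rw [show !![1,1,0;1,1,1;0,1,1] * (!![1,1,0;1,1,1;0,1,1] : Matrix (Fin 3) (Fin 3) ℤ) = !![1,1,1;1,2,1;1,1,1] + !![1,1,0;1,1,1;0,1,1] + 0 from by decide] at h
    exact (add_right_cancel (add_right_cancel h)).symm
  have h02 : B 0 2 = !![1,1,1;1,2,1;1,1,1] := by rw [hsym]; exact h20
  have h12 : B 1 2 = !![1,2,2;2,3,2;2,2,1] := by
    have h := hrec 0 2 (by norm_num) (by norm_num)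
    norm_num at h
    rw [h02, hneg (-1) (3) (by norm_num), h01, h10'] at h
    rw [show !![1,1,1;1,2,1;1,1,1] * (!![1,1,0;1,1,1;0,1,1] : Matrix (Fin 3) (Fin 3) ℤ) = !![1,2,2;2,3,2;2,2,1] + 0 + !![1,1,0;1,1,1;0,1,1] from by decide] at h
    exact (add_right_cancel (add_right_cancel h)).symm
  have h21 : B 2 1 = !![1,2,2;2,3,2;2,2,1] := by
    have h := hrec 1 1 (by norm_num) (by norm_num)
    norm_num at h
    rw [h11, h02, h10'] at h
    rw [show !![1,2,1;2,2,2;1,2,1] * (!![1,1,0;1,1,1;0,1,1] : Matrix (Fin 3) (Fin 3) ℤ) = !![1,2,2;2,3,2;2,2,1] + !![1,1,1;1,2,1;1,1,1] + !![1,1,0;1,1,1;0,1,1] from by decide] at h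
    exact (add_right_cancel (add_right_cancel h)).symm
  have h30 : B 3 0 = !![1,1,1;1,2,1;1,1,1] := by
    have h := hrec 2 0 (by norm_num) (by norm_num)
    norm_num at h
    rw [h20, h11, hneg (2) (-1) (by norm_num), h10'] at h
    rw [show !![1,1,1;1,2,1;1,1,1] * (!![1,1,0;1,1,1;0,1,1] : Matrix (Fin 3) (Fin 3) ℤ) = !![1,1,1;1,2,1;1,1,1] + !![1,2,1;2,2,2;1,2,1] + 0 from by decide] at h
    exact (add_right_cancel (add_right_cancel h)).symm
  have h03 : B 0 3 = !![1,1,1;1,2,1;1,1,1] := by rw [hsym]; exact h30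
  have h13 : B 1 3 = !![1,2,1;2,2,2;1,2,1] := by
    have h := hrec 0 3 (by norm_num) (by norm_num)
    norm_num at h
    rw [h03, hneg (-1) (4) (by norm_num), h02, h10'] at h
    rw [show !![1,1,1;1,2,1;1,1,1] * (!![1,1,0;1,1,1;0,1,1] : Matrix (Fin 3) (Fin 3) ℤ) = !![1,2,1;2,2,2;1,2,1] + 0 + !![1,1,1;1,2,1;1,1,1] from by decide] at h
    exact (add_right_cancel (add_right_cancel h)).symm
  have h22 : B 2 2 = !![1,2,2;2,3,2;2,2,1] := by
    have h := hrec 1 2 (by norm_num) (by norm_num)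
    norm_num at h
    rw [h12, h03, h11, h10'] at h
    rw [show !![1,2,2;2,3,2;2,2,1] * (!![1,1,0;1,1,1;0,1,1] : Matrix (Fin 3) (Fin 3) ℤ) = !![1,2,2;2,3,2;2,2,1] + !![1,1,1;1,2,1;1,1,1] + !![1,2,1;2,2,2;1,2,1] from by decide] at h
    exact (add_right_cancel (add_right_cancel h)).symm
  have h31 : B 3 1 = !![1,2,1;2,2,2;1,2,1] := by
    have h := hrec 2 1 (by norm_num) (by norm_num)
    norm_num at h
    rw [h21, h12, h20, h10'] at h
    rw [show !![1,2,2;2,3,2;2,2,1] * (!![1,1,0;1,1,1;0,1,1] : Matrix (Fin 3) (Fin 3) ℤ) = !![1,2,1;2,2,2;1,2,1] + !![1,2,2;2,3,2;2,2,1] + !![1,1,1;1,2,1;1,1,1] from by decide] at h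
    exact (add_right_cancel (add_right_cancel h)).symm
  have h40 : B 4 0 = !![1,1,0;1,1,1;0,1,1] := by
    have h := hrec 3 0 (by norm_num) (by norm_num)
    norm_num at h
    rw [h30, h21, hneg (3) (-1) (by norm_num), h10'] at h
    rw [show !![1,1,1;1,2,1;1,1,1] * (!![1,1,0;1,1,1;0,1,1] : Matrix (Fin 3) (Fin 3) ℤ) = !![1,1,0;1,1,1;0,1,1] + !![1,2,2;2,3,2;2,2,1] + 0 from by decide] at h
    exact (add_right_cancel (add_right_cancel h)).symm
  have h04 : B 0 4 = !![1,1,0;1,1,1;0,1,1] := by rw [hsym]; exact h40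
  have h14 : B 1 4 = !![1,1,0;1,1,1;0,1,1] := by
    have h := hrec 0 4 (by norm_num) (by norm_num)
    norm_num at h
    rw [h04, hneg (-1) (5) (by norm_num), h03, h10'] at h
    rw [show !![1,1,0;1,1,1;0,1,1] * (!![1,1,0;1,1,1;0,1,1] : Matrix (Fin 3) (Fin 3) ℤ) = !![1,1,0;1,1,1;0,1,1] + 0 + !![1,1,1;1,2,1;1,1,1] from by decide] at h
    exact (add_right_cancel (add_right_cancel h)).symm
  have h23 : B 2 3 = !![1,1,1;1,2,1;1,1,1] := by
    have h := hrec 1 3 (by norm_num) (by norm_num)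
    norm_num at h
    rw [h13, h04, h12, h10'] at h
    rw [show !![1,2,1;2,2,2;1,2,1] * (!![1,1,0;1,1,1;0,1,1] : Matrix (Fin 3) (Fin 3) ℤ) = !![1,1,1;1,2,1;1,1,1] + !![1,1,0;1,1,1;0,1,1] + !![1,2,2;2,3,2;2,2,1] from by decide] at h
    exact (add_right_cancel (add_right_cancel h)).symm
  have h32 : B 3 2 = !![1,1,1;1,2,1;1,1,1] := by
    have h := hrec 2 2 (by norm_num) (by norm_num)
    norm_num at h
    rw [h22, h13, h21, h10'] at h
    rw [show !![1,2,2;2,3,2;2,2,1] * (!![1,1,0;1,1,1;0,1,1] : Matrix (Fin 3) (Fin 3) ℤ) = !![1,1,1;1,2,1;1,1,1] + !![1,2,1;2,2,2;1,2,1] + !![1,2,2;2,3,2;2,2,1] from by decide] at h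
    exact (add_right_cancel (add_right_cancel h)).symm
  have h41 : B 4 1 = !![1,1,0;1,1,1;0,1,1] := by
    have h := hrec 3 1 (by norm_num) (by norm_num)
    norm_num at h
    rw [h31, h22, h30, h10'] at h
    rw [show !![1,2,1;2,2,2;1,2,1] * (!![1,1,0;1,1,1;0,1,1] : Matrix (Fin 3) (Fin 3) ℤ) = !![1,1,0;1,1,1;0,1,1] + !![1,2,2;2,3,2;2,2,1] + !![1,1,1;1,2,1;1,1,1] from by decide] at h
    exact (add_right_cancel (add_right_cancel h)).symm
  have h50 : B 5 0 = !![1,0,0;0,1,0;0,0,1] := by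
    have h := hrec 4 0 (by norm_num) (by norm_num)
    norm_num at h
    rw [h40, h31, hneg (4) (-1) (by norm_num), h10'] at h
    rw [show !![1,1,0;1,1,1;0,1,1] * (!![1,1,0;1,1,1;0,1,1] : Matrix (Fin 3) (Fin 3) ℤ) = !![1,0,0;0,1,0;0,0,1] + !![1,2,1;2,2,2;1,2,1] + 0 from by decide] at h
    exact (add_right_cancel (add_right_cancel h)).symm
  have h05 : B 0 5 = !![1,0,0;0,1,0;0,0,1] := by rw [hsym]; exact h50
  intro n m hn hm hnm
  have hn5 : n ≤ 5 := by omega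
  have hm5 : m ≤ 5 - n := by omega
  interval_cases n <;> interval_cases m <;>
    norm_num [h00', h01, h02, h03, h04, h05, h10', h11, h12, h13, h14, h20, h21, h22, h23, h30, h31, h32, h40, h41, h50]
end

section
/- Let b_1, b_2, b_3 : ℤ → R be functions into a commutative ring, assigned to boxes labeled 1,2,3 at integer shift positions. Define T^{(n,0)}_k as the sum over weakly increasing sequences 1 ≤ i_1 ≤ i_2 ≤ ... ≤ i_n ≤ 3 of the products b_{i_1}(k+n-1)·b_{i_2}(k+n-2)···b_{i_n}(k) (one-row semistandard tableaux of length n, rightmost box at shift k), and T^{(n-1,1)}_k as the corresponding sum over two-row semistandard tableaux of shape (n,1) with entries in {1,2,3}. Then T^{(n,0)}_0 · T^{(1,0)}_n = T^{(n-1,1)}_0 + T^{(n+1,0)}_0. -/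
open Finset

/-- One-row tableau sum T^{(n,0)}_k: sum over weakly increasing fillings
i₁ ≤ ⋯ ≤ iₙ from {1,2,3} of the products b_{i₁}(k+n-1)⋯b_{iₙ}(k)
(rightmost box at shift k, shifts increasing by 1 leftwards). -/
def Trow {R : Type*} [CommRing R] (b : Fin 3 → ℤ → R) (n : ℕ) (k : ℤ) : R :=
  ∑ f ∈ univ.filter (fun f : Fin n → Fin 3 => ∀ i j : Fin n, i ≤ j → f i ≤ f j),
    ∏ j : Fin n, b (f j) (k + (n : ℤ) - 1 - (j : ℤ))

/-- Two-row tableau sum T^{(m,1)}_k of shape (m+1,1): top row of length m+1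
weakly increasing (rightmost box at shift k), one box below the leftmost top
box (at shift k+m+1), strictly larger than the entry above it. -/
def Thook {R : Type*} [CommRing R] (b : Fin 3 → ℤ → R) (m : ℕ) (k : ℤ) : R :=
  ∑ p ∈ univ.filter (fun p : (Fin (m + 1) → Fin 3) × Fin 3 =>
      (∀ i j : Fin (m + 1), i ≤ j → p.1 i ≤ p.1 j) ∧ p.1 0 < p.2),
    (∏ j : Fin (m + 1), b (p.1 j) (k + (m : ℤ) - (j : ℤ))) * b p.2 (k + (m : ℤ) + 1)

private lemma cons_mono_iff {m : ℕ} (a : Fin 3) (f : Fin (m+1) → Fin 3) :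
    (∀ i j : Fin (m+2), i ≤ j → (Fin.cons a f : Fin (m+2) → Fin 3) i ≤ (Fin.cons a f : Fin (m+2) → Fin 3) j) ↔
    ((∀ i j : Fin (m+1), i ≤ j → f i ≤ f j) ∧ a ≤ f 0) := by
  constructor
  · intro h
    refine ⟨fun i j hij => ?_, ?_⟩
    · have := h i.succ j.succ (by simpa [Fin.succ_le_succ_iff] using hij)
      simpa using this
    · have := h 0 (Fin.succ 0) (Fin.zero_le _)
      simpa using this
  · rintro ⟨hf, ha⟩ i j hij
    induction i using Fin.cases with
    | zero =>
      induction j using Fin.cases with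
      | zero => exact le_rfl
      | succ j' =>
        simp only [Fin.cons_zero, Fin.cons_succ]
        exact le_trans ha (hf 0 j' (Fin.zero_le _))
    | succ i' =>
      induction j using Fin.cases with
      | zero => exact absurd hij (by simp [Fin.le_def])
      | succ j' =>
        simp only [Fin.cons_succ]
        exact hf i' j' (by simpa [Fin.succ_le_succ_iff] using hij)

/-- The Pieri-type identity underlying the su(3) fusion hierarchy:
T^{(n,0)}_0 · T^{(1,0)}_n = T^{(n-1,1)}_0 + T^{(n+1,0)}_0. -/
theorem tableau_pieri {R : Type*} [CommRing R] (b : Fin 3 → ℤ → R) (n : ℕ) (hn : 1 ≤ n) :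
    Trow b n 0 * Trow b 1 (n : ℤ) = Thook b (n - 1) 0 + Trow b (n + 1) 0 := by
  classical
  obtain ⟨m, rfl⟩ : ∃ m, n = m + 1 := ⟨n - 1, by omega⟩
  simp only [Nat.add_sub_cancel]
  set C : ∀ k : ℕ, (Fin k → Fin 3) → Prop :=
    fun k f => ∀ i j : Fin k, i ≤ j → f i ≤ f j with hC
  -- canonical form of Trow b (m+1) 0
  have hrow : Trow b (m+1) 0 = ∑ f : Fin (m+1) → Fin 3,
      if C (m+1) f then ∏ j : Fin (m+1), b (f j) ((m : ℤ) - j) else 0 := by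
    rw [Trow, Finset.sum_filter]
    refine Finset.sum_congr rfl fun f _ => ?_
    congr 1
    refine Finset.prod_congr rfl fun j _ => ?_
    congr 1
    push_cast; ring
  -- canonical form of Trow b 1 (m+1)
  have h1 : Trow b 1 ((m+1 : ℕ) : ℤ) = ∑ a : Fin 3, b a ((m : ℤ) + 1) := by
    rw [Trow, Finset.filter_true_of_mem (fun f _ i j hij => by
      have : i = j := Subsingleton.elim i j
      subst this; exact le_rfl)]
    rw [← (Equiv.funUnique (Fin 1) (Fin 3)).symm.sum_comp]
    refine Finset.sum_congr rfl fun a _ => ?_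
    simp only [Fin.prod_univ_one, Equiv.funUnique, Equiv.coe_fn_symm_mk]
    congr 1
    push_cast [Fin.val_zero]; ring
  -- canonical form of Thook b m 0
  have hhook : Thook b m 0 = ∑ f : Fin (m+1) → Fin 3, ∑ a : Fin 3,
      if C (m+1) f ∧ f 0 < a then
        (∏ j : Fin (m+1), b (f j) ((m : ℤ) - j)) * b a ((m : ℤ) + 1) else 0 := by
    rw [Thook, Finset.sum_filter, Fintype.sum_prod_type]
    refine Finset.sum_congr rfl fun f _ => Finset.sum_congr rfl fun a _ => ?_
    congr 2
    · refine Finset.prod_congr rfl fun j _ => ?_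
      congr 1; ring
    · ring
  -- canonical form of Trow b (m+2) 0 via Fin.cons
  have hrow2 : Trow b (m+1+1) 0 = ∑ f : Fin (m+1) → Fin 3, ∑ a : Fin 3,
      if C (m+1) f ∧ ¬ f 0 < a then
        (∏ j : Fin (m+1), b (f j) ((m : ℤ) - j)) * b a ((m : ℤ) + 1) else 0 := by
    rw [Trow, Finset.sum_filter]
    rw [← (Fin.consEquiv (fun _ : Fin (m+2) => Fin 3)).sum_comp]
    rw [Fintype.sum_prod_type, Finset.sum_comm]
    refine Finset.sum_congr rfl fun f _ => Finset.sum_congr rfl fun a _ => ?_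
    have hmono := cons_mono_iff a f
    simp only [Fin.consEquiv_apply]
    by_cases hc : C (m+1) f ∧ a ≤ f 0
    · rw [if_pos (hmono.mpr hc), if_pos (show C (m+1) f ∧ ¬ f 0 < a from ⟨hc.1, not_lt.mpr hc.2⟩)]
      rw [Fin.prod_univ_succ]
      rw [mul_comm]
      congr 1
      · refine Finset.prod_congr rfl fun j _ => ?_
        simp only [Fin.cons_succ]
        congr 1
        simp only [Fin.val_succ]
        push_cast; ring
      · simp only [Fin.cons_zero, Fin.val_zero]
        congr 1
        push_cast; ring
    · rw [if_neg (fun h => hc (hmono.mp h)),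
          if_neg (fun h : C (m+1) f ∧ ¬ f 0 < a => hc ⟨h.1, not_lt.mp h.2⟩)]
  rw [hrow, h1, hrow2, hhook, Finset.sum_mul_sum]
  rw [← Finset.sum_add_distrib]
  refine Finset.sum_congr rfl fun f _ => ?_
  rw [← Finset.sum_add_distrib]
  refine Finset.sum_congr rfl fun a _ => ?_
  by_cases hcf : C (m+1) f
  · rw [if_pos hcf]
    by_cases hlt : f 0 < a
    · rw [if_pos ⟨hcf, hlt⟩, if_neg (by tauto), add_zero]
    · rw [if_neg (by tauto), if_pos ⟨hcf, hlt⟩, zero_add]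
  · rw [if_neg hcf, if_neg (by tauto), if_neg (by tauto), zero_mul, add_zero]
end

section
/- In a commutative ring, suppose families T^{(1,0)}_k, T^{(0,1)}_k, f_k (k ∈ ℤ) are given and define T^{(n,m)}_0 by the determinant of the (n+m)×(n+m) matrix with, as in the fusion hierarchy determinant formula, diagonal entries T^{(1,0)} at appropriate shifts, superdiagonal entries T^{(0,1)}, second superdiagonal entries f, subdiagonal entries 1, and zeros elsewhere (with shifts decreasing from n+m-1 down to 0 along the diagonal). Then for m=0 these determinants satisfy T^{(n,0)}_0 · T^{(1,0)}_n = T^{(n-1,1)}_0 + T^{(n+1,0)}_0, where T^{(n-1,1)}_0 is the determinant with the block structure corresponding to (n-1,1). -/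
/-- Banded Hessenberg matrix whose determinant gives T^{(n,0)}_0:
diagonal t_{n-1},…,t_0, superdiagonal u, second superdiagonal a,
subdiagonal 1 (0-indexed translation of the 1-indexed formulas
M_{i,i}=t_{n-i}, M_{i,i+1}=u_{n-i-1}, M_{i,i+2}=a_{n-i-2}, M_{i+1,i}=1). -/
def fusionM {R : Type*} [CommRing R] (t u a : ℕ → R) (n : ℕ) :
    Matrix (Fin n) (Fin n) R :=
  Matrix.of fun i j =>
    if (j : ℕ) = (i : ℕ) then t (n - 1 - i)
    else if (j : ℕ) = (i : ℕ) + 1 then u (n - 2 - i)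
    else if (j : ℕ) = (i : ℕ) + 2 then a (n - 3 - i)
    else if (i : ℕ) = (j : ℕ) + 1 then 1
    else 0

/-- Determinant matrix for T^{(n-1,1)}_0 (total size n): upper block of size 1
with diagonal entry T^{(0,1)}_{n-1} = u_{n-1} and boundary entry f_{n-2} = a_{n-2},
lower block of size n-1 with diagonal t, superdiagonal u, second superdiagonal a,
and subdiagonal 1. -/
def fusionN {R : Type*} [CommRing R] (t u a : ℕ → R) (n : ℕ) :
    Matrix (Fin n) (Fin n) R :=
  Matrix.of fun i j =>
    if (i : ℕ) = 0 ∧ (j : ℕ) = 0 then u (n - 1)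
    else if (i : ℕ) = 0 ∧ (j : ℕ) = 1 then a (n - 2)
    else if 1 ≤ (i : ℕ) ∧ (j : ℕ) = (i : ℕ) then t (n - 1 - i)
    else if 1 ≤ (i : ℕ) ∧ (j : ℕ) = (i : ℕ) + 1 then u (n - 2 - i)
    else if 1 ≤ (i : ℕ) ∧ (j : ℕ) = (i : ℕ) + 2 then a (n - 3 - i)
    else if (i : ℕ) = (j : ℕ) + 1 then 1
    else 0


lemma fusion_sub0 {R : Type*} [CommRing R] (t u a : ℕ → R) (m : ℕ) :
    (fusionM t u a (m + 2)).submatrix (Fin.succAbove 0) Fin.succ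
      = fusionM t u a (m + 1) := by
  ext i j
  simp only [Matrix.submatrix_apply, Fin.succAbove_zero, fusionM, Matrix.of_apply,
    Fin.val_succ]
  split_ifs <;> first | omega | rfl | (congr 1; omega)

set_option maxHeartbeats 1000000 in
lemma fusion_sub1 {R : Type*} [CommRing R] (t u a : ℕ → R) (m : ℕ) :
    (fusionM t u a (m + 2)).submatrix (Fin.succAbove 1) Fin.succ
      = fusionN t u a (m + 1) := by
  ext i j
  have hv : ((Fin.succAbove 1 i : Fin (m + 2)) : ℕ)
      = if (i : ℕ) < 1 then (i : ℕ) else (i : ℕ) + 1 := by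
    unfold Fin.succAbove
    split_ifs with h h2 h3 <;>
      simp_all [Fin.lt_def, Fin.castSucc, Fin.succ] <;> omega
  simp only [Matrix.submatrix_apply, fusionM, fusionN, Matrix.of_apply, Fin.val_succ, hv]
  by_cases hi : (i : ℕ) < 1 <;> simp only [hi, if_true, if_false] <;>
    split_ifs <;> first | omega | rfl | (congr 1; omega)

/-- The determinants of the fusion hierarchy satisfy the relation
T^{(n,0)}_0 · T^{(1,0)}_n = T^{(n-1,1)}_0 + T^{(n+1,0)}_0, where
T^{(n,0)}_0 = det(fusionM n) and T^{(n-1,1)}_0 = det(fusionN n). -/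
theorem fusion_det_recursion {R : Type*} [CommRing R] (t u a : ℕ → R) (n : ℕ)
    (hn : 1 ≤ n) :
    (fusionM t u a n).det * t n = (fusionN t u a n).det + (fusionM t u a (n + 1)).det := by
  obtain ⟨m, rfl⟩ : ∃ m, n = m + 1 := ⟨n - 1, by omega⟩
  have key : (fusionM t u a (m + 2)).det
      = t (m + 1) * (fusionM t u a (m + 1)).det - (fusionN t u a (m + 1)).det := by
    rw [Matrix.det_succ_column_zero]
    rw [Fin.sum_univ_succ, Fin.sum_univ_succ]
    have h0 : (fusionM t u a (m + 2)) 0 0 = t (m + 1) := by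
      simp [fusionM]
    have h1 : (fusionM t u a (m + 2)) (Fin.succ 0) 0 = 1 := by
      simp [fusionM]
    have htail : ∀ i : Fin m, (fusionM t u a (m + 2)) (Fin.succ (Fin.succ i)) 0 = 0 := by
      intro i
      simp only [fusionM, Matrix.of_apply, Fin.val_succ, Fin.val_zero]
      split_ifs <;> first | omega | rfl | simp_all
    simp only [h0, h1, htail, fusion_sub0, mul_zero, zero_mul, mul_one,
      Finset.sum_const_zero, add_zero, Fin.val_zero, Fin.val_succ, zero_add, pow_zero,
      pow_one, one_mul, neg_mul, neg_one_mul]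
    have h2 : (Fin.succ (0 : Fin (m + 1))) = (1 : Fin (m + 2)) := rfl
    rw [h2, fusion_sub1]
    ring
  rw [key]; ring
end
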